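/- arXiv:1710.09903 — 3 statements merged into one kernel-verified Lean document; each statement's English description precedes it below -/
import Mathlib

section
/- Let Q(ζ) = Π_{j=1}^4 (ζ − γⱼ) be a monic quartic with real roots γ₁ ≤ γ₂ ≤ γ₃ ≤ γ₄, with mean m and variance σ² of the roots. If α ∈ (−∞, γ₁) ∪ (γ₂, γ₃) ∪ (γ₄, ∞) and |α − m| ≤ σ/√3, then Q(α) > 0 and ω(α) = −Σ_{1≤j<k≤4}(γⱼ − α)(γₖ − α) ≥ 0. -/
theorem coercivity_sign_conditions (γ₁ γ₂ γ₃ γ₄ : ℝ)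
    (h12 : γ₁ ≤ γ₂) (h23 : γ₂ ≤ γ₃) (h34 : γ₃ ≤ γ₄) (α : ℝ)
    (hα : α < γ₁ ∨ (γ₂ < α ∧ α < γ₃) ∨ γ₄ < α)
    (hσ : |α - (γ₁ + γ₂ + γ₃ + γ₄) / 4|
      ≤ Real.sqrt ((1/4) * ((γ₁ - (γ₁ + γ₂ + γ₃ + γ₄) / 4)^2
          + (γ₂ - (γ₁ + γ₂ + γ₃ + γ₄) / 4)^2
          + (γ₃ - (γ₁ + γ₂ + γ₃ + γ₄) / 4)^2
          + (γ₄ - (γ₁ + γ₂ + γ₃ + γ₄) / 4)^2)) / Real.sqrt 3) :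
    0 < (α - γ₁) * (α - γ₂) * (α - γ₃) * (α - γ₄) ∧
    0 ≤ -((γ₁ - α) * (γ₂ - α) + (γ₁ - α) * (γ₃ - α) + (γ₁ - α) * (γ₄ - α)
      + (γ₂ - α) * (γ₃ - α) + (γ₂ - α) * (γ₄ - α) + (γ₃ - α) * (γ₄ - α)) := by
  set m := (γ₁ + γ₂ + γ₃ + γ₄) / 4 with hm
  set V := (1/4) * ((γ₁ - m)^2 + (γ₂ - m)^2 + (γ₃ - m)^2 + (γ₄ - m)^2) with hV
  have hV0 : (0:ℝ) ≤ V := by positivity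
  have hsq : (α - m)^2 ≤ V / 3 := by
    rw [← Real.sqrt_div hV0 3] at hσ
    have h1 : |α - m| ^ 2 ≤ Real.sqrt (V / 3) ^ 2 :=
      pow_le_pow_left₀ (abs_nonneg _) hσ 2
    rwa [sq_abs, Real.sq_sqrt (by positivity)] at h1
  constructor
  · rcases hα with h | ⟨h1, h2⟩ | h
    · have a1 : α - γ₁ < 0 := by linarith
      have a2 : α - γ₂ < 0 := by linarith
      have a3 : α - γ₃ < 0 := by linarith
      have a4 : α - γ₄ < 0 := by linarith
      nlinarith [mul_pos (mul_pos_of_neg_of_neg a1 a2) (mul_pos_of_neg_of_neg a3 a4)]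
    · have a1 : 0 < α - γ₁ := by linarith
      have a2 : 0 < α - γ₂ := by linarith
      have a3 : α - γ₃ < 0 := by linarith
      have a4 : α - γ₄ < 0 := by linarith
      nlinarith [mul_pos (mul_pos a1 a2) (mul_pos_of_neg_of_neg a3 a4)]
    · have a1 : 0 < α - γ₁ := by linarith
      have a2 : 0 < α - γ₂ := by linarith
      have a3 : 0 < α - γ₃ := by linarith
      have a4 : 0 < α - γ₄ := by linarith
      exact mul_pos (mul_pos (mul_pos a1 a2) a3) a4
  · have key : -((γ₁ - α) * (γ₂ - α) + (γ₁ - α) * (γ₃ - α) + (γ₁ - α) * (γ₄ - α)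
      + (γ₂ - α) * (γ₃ - α) + (γ₂ - α) * (γ₄ - α) + (γ₃ - α) * (γ₄ - α))
        = 2 * V - 6 * (α - m)^2 := by rw [hV, hm]; ring
    linarith [hsq]
end

section
/- Let w ∈ C^∞((0,∞)), let w̃ ∈ ℝ, and let α₁ < γ < α₂. Then |w̃| ≤ C(α₁, α₂, γ)·(|w|_{α₁} + |w + x^γ w̃|_{α₂}), where |g|²_α = ∫₀^∞ x^{−2α} g(x)² dx/x. -/
open MeasureTheory ENNReal

private lemma rpow_lb (e : ℝ) {x : ℝ} (hx : x ∈ Set.Ioc (1:ℝ) 2) : min 1 (2 ^ e) ≤ x ^ e := by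
  have hx1 : (1:ℝ) ≤ x := hx.1.le
  have hx0 : (0:ℝ) < x := lt_of_lt_of_le one_pos hx1
  rcases le_or_gt 0 e with he | he
  · exact le_trans (min_le_left _ _) (Real.one_le_rpow hx1 he)
  · refine le_trans (min_le_right _ _) ?_
    rw [show e = -(-e) by ring, Real.rpow_neg hx0.le, Real.rpow_neg (by norm_num)]
    exact inv_anti₀ (Real.rpow_pos_of_pos hx0 _)
      (Real.rpow_le_rpow hx0.le hx.2 (by linarith))

private lemma key_bound (α : ℝ) (g : ℝ → ℝ)
    (hg : AEMeasurable (fun x => ENNReal.ofReal ((g x)^2))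
      (volume.restrict (Set.Ioc (1:ℝ) 2))) :
    ∫⁻ x in Set.Ioc (1:ℝ) 2, ENNReal.ofReal ((g x)^2)
      ≤ (ENNReal.ofReal (min 1 (2 ^ (-2*α)) / 2))⁻¹
        * ∫⁻ x in Set.Ioi (0:ℝ), ENNReal.ofReal (x ^ (-2*α) * (g x)^2 / x) := by
  set m : ℝ := min 1 (2 ^ (-2*α)) / 2 with hm_def
  have hm : 0 < m := by
    have : (0:ℝ) < min 1 (2 ^ (-2*α)) := lt_min one_pos (Real.rpow_pos_of_pos two_pos _)
    positivity
  have h0 : ENNReal.ofReal m ≠ 0 := (ENNReal.ofReal_pos.mpr hm).ne'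
  have htop : ENNReal.ofReal m ≠ ⊤ := ENNReal.ofReal_ne_top
  have hmain : ENNReal.ofReal m * ∫⁻ x in Set.Ioc (1:ℝ) 2, ENNReal.ofReal ((g x)^2)
      ≤ ∫⁻ x in Set.Ioi (0:ℝ), ENNReal.ofReal (x ^ (-2*α) * (g x)^2 / x) := by
    rw [← lintegral_const_mul'' _ hg]
    refine le_trans ?_ (lintegral_mono_set
      (show Set.Ioc (1:ℝ) 2 ⊆ Set.Ioi 0 from fun x hx => lt_trans one_pos hx.1))
    refine setLIntegral_mono' measurableSet_Ioc (fun x hx => ?_)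
    have hx0 : (0:ℝ) < x := lt_trans one_pos hx.1
    rw [← ENNReal.ofReal_mul hm.le]
    apply ENNReal.ofReal_le_ofReal
    have h1 : m ≤ x ^ (-2*α) / x :=
      div_le_div₀ (Real.rpow_nonneg hx0.le _) (rpow_lb _ hx) hx0 hx.2
    have h2 : x ^ (-2*α) * (g x)^2 / x = (x ^ (-2*α) / x) * (g x)^2 := by ring
    rw [h2]
    exact mul_le_mul_of_nonneg_right h1 (sq_nonneg _)
  calc ∫⁻ x in Set.Ioc (1:ℝ) 2, ENNReal.ofReal ((g x)^2)
      = (ENNReal.ofReal m)⁻¹ * (ENNReal.ofReal m *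
          ∫⁻ x in Set.Ioc (1:ℝ) 2, ENNReal.ofReal ((g x)^2)) := by
        rw [← mul_assoc, ENNReal.inv_mul_cancel h0 htop, one_mul]
    _ ≤ (ENNReal.ofReal m)⁻¹
          * ∫⁻ x in Set.Ioi (0:ℝ), ENNReal.ofReal (x ^ (-2*α) * (g x)^2 / x) :=
        mul_le_mul_right hmain _

private lemma const_le_lint (c : ℝ) (f : ℝ → ℝ≥0∞)
    (h : ∀ x ∈ Set.Ioc (1:ℝ) 2, ENNReal.ofReal c ≤ f x) :
    ENNReal.ofReal c ≤ ∫⁻ x in Set.Ioc (1:ℝ) 2, f x := by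
  have hvol : volume (Set.Ioc (1:ℝ) 2) = 1 := by
    rw [Real.volume_Ioc]; norm_num
  calc ENNReal.ofReal c = ENNReal.ofReal c * volume (Set.Ioc (1:ℝ) 2) := by
        rw [hvol, mul_one]
    _ = ∫⁻ _x in Set.Ioc (1:ℝ) 2, ENNReal.ofReal c := (setLIntegral_const _ _).symm
    _ ≤ ∫⁻ x in Set.Ioc (1:ℝ) 2, f x := setLIntegral_mono' measurableSet_Ioc h

theorem coefficient_control (α₁ α₂ γ : ℝ) (h1 : α₁ < γ) (h2 : γ < α₂) :
    ∃ C : ENNReal, C < ⊤ ∧ ∀ w : ℝ → ℝ, ContDiffOn ℝ (⊤ : ℕ∞) w (Set.Ioi 0) → ∀ wt : ℝ,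
      ENNReal.ofReal |wt|
        ≤ C * ((∫⁻ x in Set.Ioi (0 : ℝ),
              ENNReal.ofReal (x ^ (-2 * α₁) * (w x)^2 / x)) ^ (1/2 : ℝ)
          + (∫⁻ x in Set.Ioi (0 : ℝ),
              ENNReal.ofReal (x ^ (-2 * α₂) * (w x + x ^ γ * wt)^2 / x)) ^ (1/2 : ℝ)) := by
  set m₁ : ℝ := min 1 (2 ^ (-2*α₁)) / 2 with hm1_def
  set m₂ : ℝ := min 1 (2 ^ (-2*α₂)) / 2 with hm2_def
  set m₀ : ℝ := min 1 (2 ^ γ) with hm0_def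
  have hm₁ : 0 < m₁ := by
    have : (0:ℝ) < min 1 (2 ^ (-2*α₁)) := lt_min one_pos (Real.rpow_pos_of_pos two_pos _)
    positivity
  have hm₂ : 0 < m₂ := by
    have : (0:ℝ) < min 1 (2 ^ (-2*α₂)) := lt_min one_pos (Real.rpow_pos_of_pos two_pos _)
    positivity
  have hm₀ : 0 < m₀ := lt_min one_pos (Real.rpow_pos_of_pos two_pos _)
  set K : ENNReal := (ENNReal.ofReal (m₀^2))⁻¹ *
    (2 * (ENNReal.ofReal m₁)⁻¹ + 2 * (ENNReal.ofReal m₂)⁻¹) with hK_def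
  have hKne : K ≠ ⊤ := by
    apply ENNReal.mul_ne_top
    · exact ENNReal.inv_ne_top.mpr (ENNReal.ofReal_pos.mpr (by positivity)).ne'
    · apply ENNReal.add_ne_top.mpr
      constructor <;> exact ENNReal.mul_ne_top (by norm_num)
        (ENNReal.inv_ne_top.mpr (ENNReal.ofReal_pos.mpr (by positivity)).ne')
  refine ⟨K ^ (1/2 : ℝ), ENNReal.rpow_lt_top_of_nonneg (by norm_num) hKne, ?_⟩
  intro w hw wt
  set A := ∫⁻ x in Set.Ioi (0 : ℝ), ENNReal.ofReal (x ^ (-2 * α₁) * (w x)^2 / x) with hA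
  set B := ∫⁻ x in Set.Ioi (0 : ℝ),
    ENNReal.ofReal (x ^ (-2 * α₂) * (w x + x ^ γ * wt)^2 / x) with hB
  -- measurability
  have hsub : Set.Ioc (1:ℝ) 2 ⊆ Set.Ioi (0:ℝ) := fun x hx => lt_trans one_pos hx.1
  have hwm : AEMeasurable w (volume.restrict (Set.Ioc (1:ℝ) 2)) :=
    ((hw.continuousOn.mono hsub).aemeasurable measurableSet_Ioc)
  have hrm : AEMeasurable (fun x : ℝ => x ^ γ) (volume.restrict (Set.Ioc (1:ℝ) 2)) := by
    refine ContinuousOn.aemeasurable (fun x hx => ?_) measurableSet_Ioc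
    exact (Real.continuousAt_rpow_const x γ (Or.inl (lt_trans one_pos hx.1).ne')).continuousWithinAt
  have hga : AEMeasurable (fun x => ENNReal.ofReal ((w x)^2))
      (volume.restrict (Set.Ioc (1:ℝ) 2)) :=
    ENNReal.measurable_ofReal.comp_aemeasurable (hwm.pow_const 2)
  have hgb : AEMeasurable (fun x => ENNReal.ofReal ((w x + x ^ γ * wt)^2))
      (volume.restrict (Set.Ioc (1:ℝ) 2)) :=
    ENNReal.measurable_ofReal.comp_aemeasurable ((hwm.add (hrm.mul_const wt)).pow_const 2)
  have ha := key_bound α₁ w hga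
  have hb := key_bound α₂ (fun x => w x + x ^ γ * wt) hgb
  rw [← hA] at ha
  rw [← hB] at hb
  -- main square bound
  have hwt : ENNReal.ofReal (m₀^2 * wt^2)
      ≤ 2 * ((ENNReal.ofReal m₁)⁻¹ * A) + 2 * ((ENNReal.ofReal m₂)⁻¹ * B) := by
    calc ENNReal.ofReal (m₀^2 * wt^2)
        ≤ ∫⁻ x in Set.Ioc (1:ℝ) 2, ENNReal.ofReal ((x ^ γ * wt)^2) := by
          refine const_le_lint _ _ (fun x hx => ?_)
          apply ENNReal.ofReal_le_ofReal
          have h := rpow_lb γ hx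
          rw [mul_pow]
          exact mul_le_mul_of_nonneg_right
            (pow_le_pow_left₀ hm₀.le h 2) (sq_nonneg _)
      _ ≤ ∫⁻ x in Set.Ioc (1:ℝ) 2, (2 * ENNReal.ofReal ((w x)^2)
            + 2 * ENNReal.ofReal ((w x + x ^ γ * wt)^2)) := by
          refine setLIntegral_mono' measurableSet_Ioc (fun x _ => ?_)
          have hr : ((x:ℝ) ^ γ * wt)^2 ≤ 2 * (w x)^2 + 2 * (w x + x ^ γ * wt)^2 := by
            nlinarith [sq_nonneg (w x + (w x + x ^ γ * wt))]
          calc ENNReal.ofReal ((x ^ γ * wt)^2)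
              ≤ ENNReal.ofReal (2 * (w x)^2 + 2 * (w x + x ^ γ * wt)^2) :=
                ENNReal.ofReal_le_ofReal hr
            _ = 2 * ENNReal.ofReal ((w x)^2) + 2 * ENNReal.ofReal ((w x + x ^ γ * wt)^2) := by
                rw [ENNReal.ofReal_add (by positivity) (by positivity),
                  ENNReal.ofReal_mul (by norm_num), ENNReal.ofReal_mul (by norm_num)]
                norm_num
      _ = 2 * (∫⁻ x in Set.Ioc (1:ℝ) 2, ENNReal.ofReal ((w x)^2))
            + 2 * ∫⁻ x in Set.Ioc (1:ℝ) 2, ENNReal.ofReal ((w x + x ^ γ * wt)^2) := by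
          rw [lintegral_add_left' (hga.const_mul 2), lintegral_const_mul'' _ hga,
            lintegral_const_mul'' _ hgb]
      _ ≤ 2 * ((ENNReal.ofReal m₁)⁻¹ * A) + 2 * ((ENNReal.ofReal m₂)⁻¹ * B) :=
          add_le_add (mul_le_mul_right ha 2) (mul_le_mul_right hb 2)
  have hwt2 : ENNReal.ofReal (wt^2) ≤ K * (A + B) := by
    have h0 : ENNReal.ofReal (m₀^2) ≠ 0 := (ENNReal.ofReal_pos.mpr (by positivity)).ne'
    have htop : ENNReal.ofReal (m₀^2) ≠ ⊤ := ENNReal.ofReal_ne_top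
    have step : ENNReal.ofReal (m₀^2) * ENNReal.ofReal (wt^2)
        ≤ 2 * ((ENNReal.ofReal m₁)⁻¹ * A) + 2 * ((ENNReal.ofReal m₂)⁻¹ * B) := by
      rw [← ENNReal.ofReal_mul (by positivity)]; exact hwt
    calc ENNReal.ofReal (wt^2)
        = (ENNReal.ofReal (m₀^2))⁻¹ * (ENNReal.ofReal (m₀^2) * ENNReal.ofReal (wt^2)) := by
          rw [← mul_assoc, ENNReal.inv_mul_cancel h0 htop, one_mul]
      _ ≤ (ENNReal.ofReal (m₀^2))⁻¹
            * (2 * ((ENNReal.ofReal m₁)⁻¹ * A) + 2 * ((ENNReal.ofReal m₂)⁻¹ * B)) :=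
          mul_le_mul_right step _
      _ ≤ (ENNReal.ofReal (m₀^2))⁻¹
            * ((2 * (ENNReal.ofReal m₁)⁻¹ + 2 * (ENNReal.ofReal m₂)⁻¹) * (A + B)) := by
          refine mul_le_mul_right ?_ _
          rw [add_mul, mul_assoc, mul_assoc]
          exact add_le_add
            (mul_le_mul_right (mul_le_mul_right le_self_add _) _)
            (mul_le_mul_right (mul_le_mul_right le_add_self _) _)
      _ = K * (A + B) := by rw [hK_def, mul_assoc]
  -- take square roots
  have habs : ENNReal.ofReal (wt^2) = (ENNReal.ofReal |wt|) ^ (2:ℕ) := by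
    rw [← ENNReal.ofReal_pow (abs_nonneg wt), sq_abs]
  have hroot : ∀ a : ℝ≥0∞, (a ^ (2:ℕ)) ^ (1/2 : ℝ) = a := by
    intro a
    rw [← ENNReal.rpow_natCast a 2, ← ENNReal.rpow_mul]
    norm_num
  calc ENNReal.ofReal |wt|
      = (ENNReal.ofReal (wt^2)) ^ (1/2 : ℝ) := by rw [habs, hroot]
    _ ≤ (K * (A + B)) ^ (1/2 : ℝ) := ENNReal.rpow_le_rpow hwt2 (by norm_num)
    _ = K ^ (1/2 : ℝ) * (A + B) ^ (1/2 : ℝ) := ENNReal.mul_rpow_of_nonneg _ _ (by norm_num)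
    _ ≤ K ^ (1/2 : ℝ) * (A ^ (1/2 : ℝ) + B ^ (1/2 : ℝ)) :=
        mul_le_mul_right (ENNReal.rpow_add_le_add_rpow A B (by norm_num) (by norm_num)) _
end

section
/- For μ ∈ {−1/2, 0, 1/2} and ρ : (0,∞) → ℝ continuous with sup_{x ≥ x₀} x|ρ(x)| < ∞, define S_μρ(x) := −∫₁^∞ r^{−μ} ρ(xr) dr/r. Then (D_x − μ) S_μρ = ρ on (x₀, ∞), where D_x = x d/dx, and sup_{x ≥ x₀} x|S_μρ(x)| ≤ (1/(1+μ)) sup_{x ≥ x₀} x|ρ(x)|. -/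
/-!
Substituting `s = x r` gives `S_μρ(x) = -x^μ ∫_x^∞ s^{-μ-1} ρ(s) ds`. The decay `s |ρ(s)| ≤ M`
makes the integrand `O(s^{-μ-2})`, integrable at infinity because `μ > -1`, and integrating this
majorant bounds the tail integral by `M x^{-μ-1} / (1 + μ)`. Differentiating the product
`x^μ · (tail integral)` by the fundamental theorem of calculus yields `x S_μρ' = ρ + μ S_μρ`.
-/

open MeasureTheory

/-- The decaying right inverse of `D_x - μ`:
`S_μρ(x) = -∫₁^∞ r^{-μ} ρ(x r) dr/r`. -/
noncomputable def Smu (μ : ℝ) (ρ : ℝ → ℝ) : ℝ → ℝ :=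
  fun x => -∫ r in Set.Ioi (1 : ℝ), r ^ (-μ) * ρ (x * r) / r

open Set Filter Topology

theorem hasDerivAt_integral_Ioi {E : Type*} [NormedAddCommGroup E] [NormedSpace ℝ E]
    [CompleteSpace E] {f : ℝ → E} {a x : ℝ} (hf : IntegrableOn f (Ioi a)) (hax : a < x)
    (hfx : ContinuousAt f x) :
    HasDerivAt (fun y => ∫ s in Ioi y, f s) (-f x) x := by
  have hmeas : StronglyMeasurableAtFilter f (𝓝 x) :=
    ⟨Ioi a, Ioi_mem_nhds hax, hf.aestronglyMeasurable⟩
  have hFTC : HasDerivAt (fun y => (∫ s in Ioi a, f s) - ∫ s in a..y, f s) (-f x) x :=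
    (intervalIntegral.integral_hasDerivAt_right
      ((intervalIntegrable_iff_integrableOn_Ioc_of_le hax.le).2
        (hf.mono_set Ioc_subset_Ioi_self)) hmeas hfx).const_sub (∫ s in Ioi a, f s)
  refine hFTC.congr_of_eventuallyEq ?_
  filter_upwards [Ioi_mem_nhds hax] with y hy
  rw [← intervalIntegral.integral_Ioi_sub_Ioi hf hy.le, sub_sub_cancel]

theorem abs_rpow_mul_le_of_mul_abs_le {μ s c M : ℝ} (hs : 0 < s) (h : s * |c| ≤ M) :
    |s ^ (-μ - 1) * c| ≤ M * s ^ (-μ - 2) := by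
  have hsplit : s ^ (-μ - 1) = s ^ (-μ - 2) * s := by
    rw [← Real.rpow_add_one hs.ne']
    ring_nf
  rw [abs_mul, abs_of_nonneg (Real.rpow_nonneg hs.le _), hsplit, mul_assoc, mul_comm M]
  exact mul_le_mul_of_nonneg_left h (Real.rpow_nonneg hs.le _)

section TailIntegral

variable {μ a M : ℝ} {ρ : ℝ → ℝ}

theorem integrableOn_Ioi_rpow_mul_of_mul_abs_le (hμ : -1 < μ) (ha : 0 < a)
    (hρ : AEStronglyMeasurable ρ (volume.restrict (Ioi a)))
    (hM : ∀ s ∈ Ioi a, s * |ρ s| ≤ M) :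
    IntegrableOn (fun s => s ^ (-μ - 1) * ρ s) (Ioi a) := by
  have hexp : -μ - 2 < -1 := by linarith
  refine Integrable.mono' ((integrableOn_Ioi_rpow_of_lt hexp ha).const_mul M) ?_ ?_
  · refine (ContinuousOn.aestronglyMeasurable ?_ measurableSet_Ioi).mul hρ
    exact fun s hs => (Real.continuousAt_rpow_const s _
      (Or.inl (ha.trans hs).ne')).continuousWithinAt
  · filter_upwards [ae_restrict_mem measurableSet_Ioi] with s hs
    exact abs_rpow_mul_le_of_mul_abs_le (ha.trans hs) (hM s hs)

theorem abs_integral_Ioi_rpow_mul_le (hμ : -1 < μ) (ha : 0 < a)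
    (hM : ∀ s ∈ Ioi a, s * |ρ s| ≤ M) :
    |∫ s in Ioi a, s ^ (-μ - 1) * ρ s| ≤ M * a ^ (-μ - 1) / (1 + μ) := by
  have hexp : -μ - 2 < -1 := by linarith
  calc |∫ s in Ioi a, s ^ (-μ - 1) * ρ s|
      ≤ ∫ s in Ioi a, M * s ^ (-μ - 2) := by
        rw [← Real.norm_eq_abs]
        refine norm_integral_le_of_norm_le ((integrableOn_Ioi_rpow_of_lt hexp ha).const_mul M) ?_
        filter_upwards [ae_restrict_mem measurableSet_Ioi] with s hs
        exact abs_rpow_mul_le_of_mul_abs_le (ha.trans hs) (hM s hs)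
    _ = M * a ^ (-μ - 1) / (1 + μ) := by
        rw [integral_const_mul, integral_Ioi_rpow_of_lt hexp ha, show -μ - 2 + 1 = -μ - 1 by ring]
        field_simp [show (-μ - 1 : ℝ) ≠ 0 by linarith, show (1 + μ : ℝ) ≠ 0 by linarith]
        ring

end TailIntegral

section Smu

variable {μ : ℝ} {ρ : ℝ → ℝ} {x : ℝ}

theorem Smu_eq_neg_rpow_mul_integral_Ioi (hx : 0 < x) :
    Smu μ ρ x = -(x ^ μ * ∫ s in Ioi x, s ^ (-μ - 1) * ρ s) := by
  have hintegrand : ∀ r ∈ Ioi (1 : ℝ),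
      r ^ (-μ) * ρ (x * r) / r = x ^ (μ + 1) * ((x * r) ^ (-μ - 1) * ρ (x * r)) := by
    intro r hr
    have hr0 : 0 < r := one_pos.trans hr
    have hx_cancel : x ^ (μ + 1) * x ^ (-μ - 1) = 1 := by
      rw [← Real.rpow_add hx]
      norm_num
    have hr_split : r ^ (-μ - 1) = r ^ (-μ) * r⁻¹ := by
      rw [← Real.rpow_neg_one r, ← Real.rpow_add hr0]
      ring_nf
    rw [Real.mul_rpow hx.le hr0.le, hr_split, div_eq_mul_inv]
    linear_combination (-(r ^ (-μ) * r⁻¹ * ρ (x * r))) * hx_cancel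
  rw [Smu, setIntegral_congr_fun measurableSet_Ioi hintegrand, integral_const_mul,
    integral_comp_mul_left_Ioi (fun s => s ^ (-μ - 1) * ρ s) 1 hx, mul_one, smul_eq_mul,
    ← mul_assoc, ← Real.rpow_neg_one x, ← Real.rpow_add hx]
  ring_nf

theorem mul_abs_Smu_le {M : ℝ} (hμ : -1 < μ) (hx : 0 < x)
    (hM : ∀ s ∈ Ioi x, s * |ρ s| ≤ M) :
    x * |Smu μ ρ x| ≤ M / (1 + μ) := by
  have hx_cancel : x * x ^ μ * x ^ (-μ - 1) = 1 := by
    rw [← Real.rpow_one_add' hx.le (by linarith), ← Real.rpow_add hx,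
      show 1 + μ + (-μ - 1) = 0 by ring, Real.rpow_zero]
  rw [Smu_eq_neg_rpow_mul_integral_Ioi hx, abs_neg, abs_mul,
    abs_of_nonneg (Real.rpow_nonneg hx.le μ)]
  calc x * (x ^ μ * |∫ s in Ioi x, s ^ (-μ - 1) * ρ s|)
      ≤ x * (x ^ μ * (M * x ^ (-μ - 1) / (1 + μ))) := by
        gcongr
        exact abs_integral_Ioi_rpow_mul_le hμ hx hM
    _ = x * x ^ μ * x ^ (-μ - 1) * (M / (1 + μ)) := by ring
    _ = M / (1 + μ) := by rw [hx_cancel, one_mul]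

theorem hasDerivAt_Smu {a : ℝ} (hx : 0 < x) (hax : a < x)
    (hint : IntegrableOn (fun s => s ^ (-μ - 1) * ρ s) (Ioi a)) (hρ : ContinuousAt ρ x) :
    HasDerivAt (Smu μ ρ) ((ρ x + μ * Smu μ ρ x) / x) x := by
  set F : ℝ → ℝ := fun y => ∫ s in Ioi y, s ^ (-μ - 1) * ρ s
  have hF : HasDerivAt F (-(x ^ (-μ - 1) * ρ x)) x :=
    hasDerivAt_integral_Ioi hint hax
      ((Real.continuousAt_rpow_const x _ (Or.inl hx.ne')).mul hρ)
  have hpow : HasDerivAt (fun y => y ^ μ) (μ * x ^ (μ - 1)) x := by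
    simpa [mul_comm] using Real.hasDerivAt_rpow_const (p := μ) (Or.inl hx.ne')
  have hprod : HasDerivAt (Smu μ ρ)
      (-(μ * x ^ (μ - 1) * F x + x ^ μ * -(x ^ (-μ - 1) * ρ x))) x :=
    (hpow.mul hF).neg.congr_of_eventuallyEq <| by
      filter_upwards [Ioi_mem_nhds hx] with y hy using Smu_eq_neg_rpow_mul_integral_Ioi hy
  convert hprod using 1
  have hpow_pred : x ^ (μ - 1) = x ^ μ / x := by
    rw [Real.rpow_sub hx, Real.rpow_one]
  have hx_cancel : x ^ μ * x ^ (-μ - 1) = 1 / x := by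
    rw [← Real.rpow_add hx, show μ + (-μ - 1) = -1 by ring, Real.rpow_neg_one, one_div]
  rw [Smu_eq_neg_rpow_mul_integral_Ioi hx, hpow_pred]
  linear_combination (-(ρ x)) * hx_cancel

end Smu

theorem Smu_properties (μ : ℝ) (hμ : μ = -(1/2) ∨ μ = 0 ∨ μ = 1/2)
    (ρ : ℝ → ℝ) (hcont : ContinuousOn ρ (Set.Ioi 0))
    (x₀ M : ℝ) (hx₀ : 0 < x₀) (hM : ∀ x : ℝ, x₀ ≤ x → x * |ρ x| ≤ M) :
    (∀ x : ℝ, x₀ < x → HasDerivAt (Smu μ ρ) ((ρ x + μ * Smu μ ρ x) / x) x) ∧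
    (∀ x : ℝ, x₀ ≤ x → x * |Smu μ ρ x| ≤ (1 / (1 + μ)) * M) := by
  have hμ' : -1 < μ := by rcases hμ with rfl | rfl | rfl <;> norm_num
  have hint : IntegrableOn (fun s => s ^ (-μ - 1) * ρ s) (Ioi x₀) :=
    integrableOn_Ioi_rpow_mul_of_mul_abs_le hμ' hx₀
      ((hcont.mono (Ioi_subset_Ioi hx₀.le)).aestronglyMeasurable measurableSet_Ioi)
      fun s hs => hM s hs.le
  refine ⟨fun x hx => ?_, fun x hx => ?_⟩
  · exact hasDerivAt_Smu (hx₀.trans hx) hx hint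
      (hcont.continuousAt (Ioi_mem_nhds (hx₀.trans hx)))
  · rw [one_div_mul_eq_div]
    exact mul_abs_Smu_le hμ' (hx₀.trans_le hx) fun s hs => hM s (hx.trans hs.le)
end
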